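/- arXiv:2208.13597 — 3 statements merged into one kernel-verified Lean document; each statement's English description precedes it below -/
import Mathlib

section
/- Let L be an M×N complex matrix with M ≥ N whose singular values are all nonzero, and let W be a diagonal M×M matrix with nonnegative entries such that W^{1/2}L has nonzero singular values. Then the largest singular value of (L*WL)^{-1}L*W^{1/2} equals the reciprocal of the smallest singular value of W^{1/2}L, and the smallest singular value of (L*WL)^{-1}L*W^{1/2} equals the reciprocal of the largest singular value of W^{1/2}L. -/
open Matrix
open scoped ComplexOrder

/-- The singular values of a (tall) matrix `A`, defined as the square roots of the
eigenvalues of `Aᴴ * A`. For a wide matrix `T` one uses `singularValues Tᴴ`. -/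
noncomputable def singularValues {m n : Type*} [Fintype m] [Fintype n] [DecidableEq n]
    (A : Matrix m n ℂ) : n → ℝ :=
  fun i => Real.sqrt ((Matrix.posSemidef_conjTranspose_mul_self A).1.eigenvalues i)

lemma aux_sup_inf {N : ℕ} (hN : 0 < N) (f g : Fin N → ℝ) (hf : ∀ i, 0 < f i)
    (hrange : Set.range g = Set.range (fun i => (f i)⁻¹)) :
    ((⨆ j, g j) = (⨅ i, f i)⁻¹ ∧ (⨅ j, g j) = (⨆ i, f i)⁻¹) := by
  haveI : NeZero N := ⟨hN.ne'⟩
  obtain ⟨i₀, hi₀⟩ := Finite.exists_min f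
  obtain ⟨i₁, hi₁⟩ := Finite.exists_max f
  have hmem : ∀ j, ∃ i, g j = (f i)⁻¹ := by
    intro j
    have : g j ∈ Set.range (fun i => (f i)⁻¹) := hrange ▸ Set.mem_range_self j
    obtain ⟨i, hi⟩ := this
    exact ⟨i, hi.symm⟩
  have hmem' : ∀ i, ∃ j, g j = (f i)⁻¹ := by
    intro i
    have : (f i)⁻¹ ∈ Set.range g := by
      rw [hrange]; exact ⟨i, rfl⟩
    obtain ⟨j, hj⟩ := this
    exact ⟨j, hj⟩
  have hInf : (⨅ i, f i) = f i₀ :=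
    le_antisymm (ciInf_le (Set.Finite.bddBelow (Set.finite_range f)) i₀) (le_ciInf hi₀)
  have hSup : (⨆ i, f i) = f i₁ :=
    le_antisymm (ciSup_le hi₁) (le_ciSup (Set.Finite.bddAbove (Set.finite_range f)) i₁)
  constructor
  · rw [hInf]
    refine le_antisymm (ciSup_le fun j => ?_) ?_
    · obtain ⟨i, hi⟩ := hmem j
      rw [hi]
      exact inv_anti₀ (hf i₀) (hi₀ i)
    · obtain ⟨j, hj⟩ := hmem' i₀
      rw [← hj]
      exact le_ciSup (Set.Finite.bddAbove (Set.finite_range g)) j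
  · rw [hSup]
    refine le_antisymm ?_ (le_ciInf fun j => ?_)
    · obtain ⟨j, hj⟩ := hmem' i₁
      rw [← hj]
      exact ciInf_le (Set.Finite.bddBelow (Set.finite_range g)) j
    · obtain ⟨i, hi⟩ := hmem j
      rw [hi]
      exact inv_anti₀ (hf i) (hi₁ i)

theorem stmt0 (M N : ℕ) (hMN : N ≤ M)
    (L : Matrix (Fin M) (Fin N) ℂ) (ω : Fin M → ℝ) (hω : ∀ i, 0 ≤ ω i)
    (hL : ∀ i, singularValues L i ≠ 0)
    (hWL : ∀ i, singularValues (Matrix.diagonal (fun i => (Real.sqrt (ω i) : ℂ)) * L) i ≠ 0) :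
    (⨆ i, singularValues ((Lᴴ * Matrix.diagonal (fun i => (ω i : ℂ)) * L)⁻¹ * Lᴴ *
        Matrix.diagonal (fun i => (Real.sqrt (ω i) : ℂ)))ᴴ i)
      = (⨅ i, singularValues (Matrix.diagonal (fun i => (Real.sqrt (ω i) : ℂ)) * L) i)⁻¹ ∧
    (⨅ i, singularValues ((Lᴴ * Matrix.diagonal (fun i => (ω i : ℂ)) * L)⁻¹ * Lᴴ *
        Matrix.diagonal (fun i => (Real.sqrt (ω i) : ℂ)))ᴴ i)
      = (⨆ i, singularValues (Matrix.diagonal (fun i => (Real.sqrt (ω i) : ℂ)) * L) i)⁻¹ := by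
  rcases Nat.eq_zero_or_pos N with hN | hN
  · subst hN
    constructor <;> simp [Real.iSup_of_isEmpty, Real.iInf_of_isEmpty]
  set S : Matrix (Fin M) (Fin M) ℂ := Matrix.diagonal (fun i => (Real.sqrt (ω i) : ℂ)) with hS
  set B : Matrix (Fin M) (Fin N) ℂ := S * L with hB
  set C : Matrix (Fin N) (Fin N) ℂ := Bᴴ * B with hC
  have hSH : Sᴴ = S := by
    rw [hS, diagonal_conjTranspose]
    refine congrArg Matrix.diagonal (funext fun i => ?_)
    simp [Complex.conj_ofReal]
  -- diagonal ω = S * S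
  have hSS : Matrix.diagonal (fun i => (ω i : ℂ)) = S * S := by
    rw [hS, diagonal_mul_diagonal]
    exact congrArg Matrix.diagonal (funext fun i => by
      rw [← Complex.ofReal_mul, Real.mul_self_sqrt (hω i)])
  have hLWL : Lᴴ * Matrix.diagonal (fun i => (ω i : ℂ)) * L = C := by
    rw [hC, hB, conjTranspose_mul, hSH, hSS]
    simp only [Matrix.mul_assoc]
  have hCps : C.PosSemidef := hC ▸ posSemidef_conjTranspose_mul_self B
  have hCH : C.IsHermitian := hCps.1
  -- eigenvalues of C are positive
  have heigC : ∀ i, 0 < hCH.eigenvalues i := by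
    intro i
    rcases lt_or_eq_of_le (hCps.eigenvalues_nonneg i) with h | h
    · exact h
    · exfalso
      apply hWL i
      unfold singularValues
      rw [← h, Real.sqrt_zero]
  have hdet : IsUnit C.det := by
    rw [hCH.det_eq_prod_eigenvalues]
    simp only [isUnit_iff_ne_zero]
    rw [Finset.prod_ne_zero_iff]
    intro i _
    exact Complex.ofReal_ne_zero.mpr (heigC i).ne'
  -- the matrix A
  set A : Matrix (Fin N) (Fin M) ℂ := C⁻¹ * Lᴴ * S with hA
  have hCinvH : (C⁻¹).IsHermitian := hCH.inv
  have hAAH : Aᴴᴴ * Aᴴ = C⁻¹ := by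
    rw [conjTranspose_conjTranspose, hA]
    calc C⁻¹ * Lᴴ * S * (C⁻¹ * Lᴴ * S)ᴴ
        = C⁻¹ * (Lᴴ * (S * Sᴴ) * L) * (C⁻¹)ᴴ := by
          simp only [conjTranspose_mul, conjTranspose_conjTranspose, Matrix.mul_assoc]
      _ = C⁻¹ * C * (C⁻¹)ᴴ := by
          rw [hSH, hC, hB, conjTranspose_mul, hSH]
          simp only [Matrix.mul_assoc]
      _ = C⁻¹ * C * C⁻¹ := by rw [hCinvH.eq]
      _ = C⁻¹ := by rw [Matrix.nonsing_inv_mul C hdet, Matrix.one_mul]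
  -- spectrum relation
  have hCunit : IsUnit C := (Matrix.isUnit_iff_isUnit_det C).mpr hdet
  have hspec : Set.range hCinvH.eigenvalues = Set.range (fun i => (hCH.eigenvalues i)⁻¹) := by
    have h1 : spectrum ℝ C = Set.range hCH.eigenvalues := (Matrix.IsHermitian.spectrum_real_eq_range_eigenvalues hCH)
    have h2 : spectrum ℝ (C⁻¹) = Set.range hCinvH.eigenvalues :=
      (Matrix.IsHermitian.spectrum_real_eq_range_eigenvalues hCinvH)
    have h3 : (spectrum ℝ C)⁻¹ = spectrum ℝ (C⁻¹) := by
      have := spectrum.map_inv (𝕜 := ℝ) hCunit.unit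
      rwa [hCunit.unit_spec, Matrix.coe_units_inv, hCunit.unit_spec] at this
    rw [← h2, ← h3, h1]
    ext x
    simp only [Set.mem_inv, Set.mem_range]
    constructor
    · rintro ⟨i, hi⟩
      exact ⟨i, by rw [hi, inv_inv]⟩
    · rintro ⟨i, hi⟩
      exact ⟨i, by rw [← hi, inv_inv]⟩
  -- now relate singularValues
  have hsvB : ∀ i, singularValues B i = Real.sqrt (hCH.eigenvalues i) := fun i => rfl
  have key : ∀ (X Y : Matrix (Fin N) (Fin N) ℂ) (hX : X.IsHermitian) (hY : Y.IsHermitian),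
      X = Y → hX.eigenvalues = hY.eigenvalues := by
    rintro X Y hX hY rfl; rfl
  have hsvA : ∀ i, singularValues Aᴴ i = Real.sqrt (hCinvH.eigenvalues i) := by
    intro i
    unfold singularValues
    rw [key _ _ (posSemidef_conjTranspose_mul_self Aᴴ).1 hCinvH hAAH]
  set f : Fin N → ℝ := fun i => Real.sqrt (hCH.eigenvalues i) with hf
  set g : Fin N → ℝ := fun i => Real.sqrt (hCinvH.eigenvalues i) with hg
  have hfpos : ∀ i, 0 < f i := fun i => Real.sqrt_pos.mpr (heigC i)
  have hrange : Set.range g = Set.range (fun i => (f i)⁻¹) := by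
    ext x
    simp only [Set.mem_range, hg, hf]
    constructor
    · rintro ⟨j, rfl⟩
      have : hCinvH.eigenvalues j ∈ Set.range (fun i => (hCH.eigenvalues i)⁻¹) :=
        hspec ▸ Set.mem_range_self j
      obtain ⟨i, hi⟩ := this
      exact ⟨i, by rw [← hi, Real.sqrt_inv]⟩
    · rintro ⟨i, rfl⟩
      have : (hCH.eigenvalues i)⁻¹ ∈ Set.range hCinvH.eigenvalues := by
        rw [hspec]; exact ⟨i, rfl⟩
      obtain ⟨j, hj⟩ := this
      exact ⟨j, by rw [hj, Real.sqrt_inv]⟩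
  have := aux_sup_inf hN f g hfpos hrange
  constructor
  · rw [hLWL]
    simp only [← hA, hsvA, hsvB]
    exact this.1
  · rw [hLWL]
    simp only [← hA, hsvA, hsvB]
    exact this.2
end

section
/- Let H(K) be a separable RKHS on D, W = Id*∘Id with eigenvalues λ_k and H(K)-orthonormal eigenfunctions e_k forming an orthonormal basis of H(K), and let I ⊂ ℕ be finite. Let P_I f = Σ_{k∈I} ⟨f, e_k⟩_{H(K)} e_k. Then sup over f with ‖f‖_{H(K)} ≤ 1 of ‖f − P_I f‖_{ℓ∞(D)}² equals sup_{x∈D} Σ_{k∉I} |e_k(x)|². -/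
open scoped InnerProductSpace

lemma parseval_hasSum' {H : Type*} [NormedAddCommGroup H] [InnerProductSpace ℂ H]
    [CompleteSpace H] (b : HilbertBasis ℕ ℂ H) (x : H) :
    HasSum (fun i => ‖⟪b i, x⟫_ℂ‖ ^ 2) (‖x‖ ^ 2) := by
  have h := (b.hasSum_inner_mul_inner x x).mapL Complex.reCLM
  have h1 : Complex.reCLM ⟪x, x⟫_ℂ = ‖x‖ ^ 2 := inner_self_eq_norm_sq (𝕜 := ℂ) x
  rw [h1] at h
  convert h using 2 with i
  rw [← inner_conj_symm x (b i)]
  have : (starRingEnd ℂ) ⟪b i, x⟫_ℂ * ⟪b i, x⟫_ℂ = (Complex.normSq ⟪b i, x⟫_ℂ : ℂ) := by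
    rw [mul_comm, Complex.mul_conj]
  rw [this]
  simp [Complex.normSq_eq_norm_sq, ← Complex.ofReal_pow]

lemma hasSum_subtype_of_indicator' {I : Finset ℕ} (g : ℕ → ℝ) (a : ℝ)
    (h : HasSum (Set.indicator {k : ℕ | k ∉ I} g) a) :
    HasSum (fun k : {k : ℕ // k ∉ I} => g k.1) a :=
  (hasSum_subtype_iff_indicator (s := {k : ℕ | k ∉ I})).mpr h

/-- RKHS modeled via a Hilbert space `H` with feature map `Φ x = K(·,x)`, so that the
function realization of `f ∈ H` is `x ↦ ⟪Φ x, f⟫`.  For the orthogonal projection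
`P_I f = Σ_{k∈I} ⟨f, e_k⟩ e_k` onto `span{e_k : k ∈ I}`, the worst-case sup-norm error
over the unit ball equals `sup_x Σ_{k∉I} |e_k(x)|²`. -/
theorem stmt6 {D H : Type*}
    [NormedAddCommGroup H] [InnerProductSpace ℂ H] [CompleteSpace H]
    (Φ : D → H)
    (hbdd : ∃ C : ℝ, ∀ x : D, ‖Φ x‖ ≤ C)
    (b : HilbertBasis ℕ ℂ H) (I : Finset ℕ) :
    (⨆ f : {f : H // ‖f‖ ≤ 1}, ⨆ x : D,
        ‖⟪Φ x, f.1 - ∑ k ∈ I, ⟪b k, f.1⟫_ℂ • b k⟫_ℂ‖ ^ 2)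
      = ⨆ x : D, ∑' k : {k : ℕ // k ∉ I}, ‖⟪Φ x, b k.1⟫_ℂ‖ ^ 2 := by
  classical
  obtain ⟨C₀, hC₀⟩ := hbdd
  set C : ℝ := max C₀ 0 with hC
  have hCnn : 0 ≤ C := le_max_right _ _
  have hΦ : ∀ x, ‖Φ x‖ ≤ C := fun x => (hC₀ x).trans (le_max_left _ _)
  set ψ : D → H := fun x => Φ x - ∑ k ∈ I, ⟪b k, Φ x⟫_ℂ • b k with hψ
  have horth : ∀ i j, ⟪b i, b j⟫_ℂ = if i = j then (1 : ℂ) else 0 :=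
    orthonormal_iff_ite.mp b.orthonormal
  have hbk : ∀ k, ‖(b k : H)‖ = 1 := fun k => b.orthonormal.1 k
  -- key identity A
  have keyA : ∀ (f : H) (x : D),
      ⟪Φ x, f - ∑ k ∈ I, ⟪b k, f⟫_ℂ • b k⟫_ℂ = ⟪ψ x, f⟫_ℂ := by
    intro f x
    simp only [hψ, inner_sub_left, inner_sub_right, inner_sum, sum_inner,
      inner_smul_left, inner_smul_right]
    congr 1
    refine Finset.sum_congr rfl fun k _ => ?_
    rw [inner_conj_symm]
    ring
  -- key identity B
  have keyB : ∀ (x : D) (j : ℕ),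
      ⟪b j, ψ x⟫_ℂ = if j ∈ I then 0 else ⟪b j, Φ x⟫_ℂ := by
    intro x j
    simp only [hψ, inner_sub_right, inner_sum, inner_smul_right]
    rw [Finset.sum_congr rfl (fun k _ => by rw [horth j k])]
    simp only [mul_ite, mul_one, mul_zero, Finset.sum_ite_eq I j fun k => ⟪b k, Φ x⟫_ℂ]
    by_cases hj : j ∈ I <;> simp [hj]
  -- key identity C : Parseval on the tail
  have keyC : ∀ x : D,
      HasSum (fun k : {k : ℕ // k ∉ I} => ‖⟪Φ x, b k.1⟫_ℂ‖ ^ 2) (‖ψ x‖ ^ 2) := by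
    intro x
    have h := parseval_hasSum' b (ψ x)
    have heq : (fun j => ‖⟪b j, ψ x⟫_ℂ‖ ^ 2)
        = Set.indicator {k : ℕ | k ∉ I} (fun j => ‖⟪Φ x, b j⟫_ℂ‖ ^ 2) := by
      funext j
      rw [keyB]
      by_cases hj : j ∈ I <;>
        simp [Set.indicator, hj, norm_inner_symm (Φ x) (b j)]
    rw [heq] at h
    exact hasSum_subtype_of_indicator' (fun j => ‖⟪Φ x, b j⟫_ℂ‖ ^ 2) _ h
  -- bound
  have hψbd : ∀ x, ‖ψ x‖ ≤ (1 + (I.card : ℝ)) * C := by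
    intro x
    have h1 : ‖ψ x‖ ≤ ‖Φ x‖ + ‖∑ k ∈ I, ⟪b k, Φ x⟫_ℂ • b k‖ := norm_sub_le _ _
    have h2 : ‖∑ k ∈ I, ⟪b k, Φ x⟫_ℂ • b k‖ ≤ ∑ k ∈ I, ‖⟪b k, Φ x⟫_ℂ • b k‖ :=
      norm_sum_le _ _
    have h3 : ∑ k ∈ I, ‖⟪b k, Φ x⟫_ℂ • b k‖ ≤ ∑ _k ∈ I, C := by
      refine Finset.sum_le_sum fun k _ => ?_
      rw [norm_smul, hbk, mul_one]
      calc ‖⟪b k, Φ x⟫_ℂ‖ ≤ ‖(b k : H)‖ * ‖Φ x‖ := norm_inner_le_norm _ _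
        _ = ‖Φ x‖ := by rw [hbk, one_mul]
        _ ≤ C := hΦ x
    have h4 : (∑ _k ∈ I, C) = (I.card : ℝ) * C := by
      rw [Finset.sum_const, nsmul_eq_mul]
    calc ‖ψ x‖ ≤ ‖Φ x‖ + ∑ k ∈ I, ‖⟪b k, Φ x⟫_ℂ • b k‖ := h1.trans (by linarith)
      _ ≤ C + (I.card : ℝ) * C := by rw [← h4]; exact add_le_add (hΦ x) h3
      _ = (1 + (I.card : ℝ)) * C := by ring
  set M : ℝ := ((1 + (I.card : ℝ)) * C) ^ 2 with hM
  have hMnn : 0 ≤ (1 + (I.card : ℝ)) * C := by positivity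
  have hgM : ∀ x, ‖ψ x‖ ^ 2 ≤ M := fun x =>
    pow_le_pow_left₀ (norm_nonneg _) (hψbd x) 2
  -- reduce both sides
  have hL : (⨆ f : {f : H // ‖f‖ ≤ 1}, ⨆ x : D,
        ‖⟪Φ x, f.1 - ∑ k ∈ I, ⟪b k, f.1⟫_ℂ • b k⟫_ℂ‖ ^ 2)
      = ⨆ f : {f : H // ‖f‖ ≤ 1}, ⨆ x : D, ‖⟪ψ x, f.1⟫_ℂ‖ ^ 2 :=
    iSup_congr fun f => iSup_congr fun x => by rw [keyA]
  have hR : (⨆ x : D, ∑' k : {k : ℕ // k ∉ I}, ‖⟪Φ x, b k.1⟫_ℂ‖ ^ 2)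
      = ⨆ x : D, ‖ψ x‖ ^ 2 :=
    iSup_congr fun x => (keyC x).tsum_eq
  rw [hL, hR]
  have hfx_le : ∀ (f : {f : H // ‖f‖ ≤ 1}) (x : D),
      ‖⟪ψ x, f.1⟫_ℂ‖ ^ 2 ≤ ‖ψ x‖ ^ 2 := by
    intro f x
    have h1 : ‖⟪ψ x, f.1⟫_ℂ‖ ≤ ‖ψ x‖ * ‖f.1‖ := norm_inner_le_norm _ _
    have h2 : ‖ψ x‖ * ‖f.1‖ ≤ ‖ψ x‖ := by
      nlinarith [f.2, norm_nonneg (ψ x), norm_nonneg f.1]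
    exact pow_le_pow_left₀ (norm_nonneg _) (h1.trans h2) 2
  haveI : Nonempty {f : H // ‖f‖ ≤ 1} := ⟨⟨0, by simp⟩⟩
  have hLnn : (0:ℝ) ≤ ⨆ f : {f : H // ‖f‖ ≤ 1}, ⨆ x : D, ‖⟪ψ x, f.1⟫_ℂ‖ ^ 2 :=
    Real.iSup_nonneg fun f => Real.iSup_nonneg fun x => sq_nonneg _
  have hbddg : BddAbove (Set.range fun x : D => ‖ψ x‖ ^ 2) := by
    refine ⟨M, ?_⟩; rintro _ ⟨x, rfl⟩; exact hgM x
  apply le_antisymm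
  · refine ciSup_le fun f => ?_
    refine Real.iSup_le (fun x => ?_) (Real.iSup_nonneg fun x => sq_nonneg _)
    exact (hfx_le f x).trans (le_ciSup hbddg x)
  · refine Real.iSup_le (fun x => ?_) hLnn
    by_cases hx : ψ x = 0
    · simpa [hx] using hLnn
    · set c : ℂ := ((‖ψ x‖⁻¹ : ℝ) : ℂ) with hc
      have hnrm : ‖ψ x‖ ≠ 0 := fun h => hx (norm_eq_zero.mp h)
      have hf0 : ‖c • ψ x‖ ≤ 1 := by
        rw [norm_smul, hc, Complex.norm_real, Real.norm_eq_abs,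
          abs_of_nonneg (inv_nonneg.mpr (norm_nonneg (ψ x))), inv_mul_cancel₀ hnrm]
      set f₀ : {f : H // ‖f‖ ≤ 1} := ⟨c • ψ x, hf0⟩ with hf₀
      have hval : ‖⟪ψ x, f₀.1⟫_ℂ‖ ^ 2 = ‖ψ x‖ ^ 2 := by
        have h1 : ⟪ψ x, f₀.1⟫_ℂ = c * ((‖ψ x‖ : ℝ) : ℂ) ^ 2 := by
          rw [hf₀]
          simp [inner_smul_right, inner_self_eq_norm_sq_to_K (𝕜 := ℂ)]
        rw [h1, norm_mul, norm_pow, hc, Complex.norm_real, Complex.norm_real,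
          Real.norm_eq_abs, Real.norm_eq_abs, abs_of_nonneg (norm_nonneg (ψ x)),
          abs_of_nonneg (inv_nonneg.mpr (norm_nonneg (ψ x)))]
        field_simp
      have hbdd1 : BddAbove (Set.range fun x : D => ‖⟪ψ x, f₀.1⟫_ℂ‖ ^ 2) := by
        refine ⟨M, ?_⟩; rintro _ ⟨y, rfl⟩; exact (hfx_le f₀ y).trans (hgM y)
      have hbdd2 : BddAbove (Set.range fun f : {f : H // ‖f‖ ≤ 1} =>
          ⨆ x : D, ‖⟪ψ x, f.1⟫_ℂ‖ ^ 2) := by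
        refine ⟨M, ?_⟩; rintro _ ⟨f, rfl⟩
        refine Real.iSup_le (fun y => (hfx_le f y).trans (hgM y)) ?_
        have : 0 ≤ ‖ψ x‖ ^ 2 := sq_nonneg _
        linarith [hgM x]
      calc ‖ψ x‖ ^ 2 = ‖⟪ψ x, f₀.1⟫_ℂ‖ ^ 2 := hval.symm
        _ ≤ ⨆ y : D, ‖⟪ψ y, f₀.1⟫_ℂ‖ ^ 2 := le_ciSup hbdd1 x
        _ ≤ _ := le_ciSup hbdd2 f₀
end

section
/- Let γ > 0 and R > 1, and define the hyperbolic cross I(R) = { k ∈ ℤ^d : Π_{j=1}^d max{1, |k_j|/γ} ≤ R }. Then there exist constants c, C > 0 depending only on d and γ such that c·R(log R)^{d−1} ≤ |I(R)| ≤ C·R(log R)^{d−1} for all R ≥ 2. -/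
open Real Finset

noncomputable def ww (γ : ℝ) (m : ℤ) : ℝ := max 1 (|(m:ℝ)| / γ)

noncomputable def hbox (γ R : ℝ) : Finset ℤ := Finset.Icc (-⌈γ*R⌉) ⌈γ*R⌉

open Classical in
noncomputable def HS (γ : ℝ) (d : ℕ) (R : ℝ) : Finset (Fin d → ℤ) :=
  (Fintype.piFinset fun _ => hbox γ R).filter fun k => (∏ j, ww γ (k j)) ≤ R

lemma one_le_ww (γ : ℝ) (m : ℤ) : 1 ≤ ww γ m := le_max_left _ _
lemma ww_pos (γ : ℝ) (m : ℤ) : 0 < ww γ m := lt_of_lt_of_le one_pos (one_le_ww γ m)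

lemma one_le_prod_ww (γ : ℝ) {d : ℕ} (k : Fin d → ℤ) : 1 ≤ ∏ j, ww γ (k j) :=
  calc (1:ℝ) = ∏ _j : Fin d, 1 := by simp
  _ ≤ ∏ j, ww γ (k j) :=
      Finset.prod_le_prod (fun i _ => zero_le_one) (fun i _ => one_le_ww γ (k i))

lemma prod_ww_nonneg (γ : ℝ) {d : ℕ} (k : Fin d → ℤ) : 0 ≤ ∏ j, ww γ (k j) :=
  le_trans zero_le_one (one_le_prod_ww γ k)

lemma erase_prod_ww_ge (γ : ℝ) {d : ℕ} (k : Fin d → ℤ) (j : Fin d) :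
    (1:ℝ) ≤ ∏ i ∈ univ.erase j, ww γ (k i) :=
  calc (1:ℝ) = ∏ _i ∈ univ.erase j, 1 := by simp
  _ ≤ _ := Finset.prod_le_prod (fun i _ => zero_le_one) (fun i _ => one_le_ww γ (k i))

lemma single_le_prod_ww (γ : ℝ) {d : ℕ} (k : Fin d → ℤ) (j : Fin d) :
    ww γ (k j) ≤ ∏ i, ww γ (k i) := by
  rw [← Finset.mul_prod_erase univ (fun i => ww γ (k i)) (mem_univ j)]
  exact le_mul_of_one_le_right (ww_pos γ (k j)).le (erase_prod_ww_ge γ k j)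

lemma mem_hbox (hγ : 0 < γ) {R : ℝ} {m : ℤ} (h : ww γ m ≤ R) : m ∈ hbox γ R := by
  have h1 : |(m:ℝ)| / γ ≤ R := le_trans (le_max_right _ _) h
  have h2 : |(m:ℝ)| ≤ γ * R := by rw [div_le_iff₀ hγ] at h1; linarith [h1]
  rw [abs_le] at h2
  have hc := Int.le_ceil (γ*R)
  simp only [hbox, Finset.mem_Icc]
  constructor
  · exact_mod_cast le_trans (by push_cast; linarith [h2.1] : (-⌈γ*R⌉:ℝ) ≤ (m:ℝ)) le_rfl
  · exact_mod_cast le_trans h2.2 hc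

lemma ww_le_of_mem_HS {γ : ℝ} {d : ℕ} {R : ℝ} {k : Fin d → ℤ}
    (h : (∏ j, ww γ (k j)) ≤ R) (j : Fin d) : ww γ (k j) ≤ R :=
  le_trans (single_le_prod_ww γ k j) h

lemma mem_HS_iff (hγ : 0 < γ) {d : ℕ} {R : ℝ} {k : Fin d → ℤ} :
    k ∈ HS γ d R ↔ (∏ j, ww γ (k j)) ≤ R := by
  classical
  simp only [HS, Finset.mem_filter, Fintype.mem_piFinset]
  constructor
  · exact fun h => h.2
  · intro h
    exact ⟨fun j => mem_hbox hγ (ww_le_of_mem_HS h j), h⟩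

lemma natCard_eq_HS_card (hγ : 0 < γ) (d : ℕ) (R : ℝ) :
    Nat.card {k : Fin d → ℤ | (∏ j, max 1 (|(k j : ℝ)| / γ)) ≤ R} = (HS γ d R).card := by
  have h : {k : Fin d → ℤ | (∏ j, max 1 (|(k j : ℝ)| / γ)) ≤ R} = ↑(HS γ d R) := by
    ext k
    simp only [Set.mem_setOf_eq, Finset.mem_coe]
    rw [mem_HS_iff hγ]
    rfl
  rw [h, Nat.card_coe_set_eq, Set.ncard_coe_finset]

lemma HS_mono (γ : ℝ) (hγ : 0 < γ) (d : ℕ) {R₁ R₂ : ℝ} (h : R₁ ≤ R₂) :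
    HS γ d R₁ ⊆ HS γ d R₂ := by
  intro k hk
  rw [mem_HS_iff hγ] at hk ⊢
  exact le_trans hk h

lemma one_le_HS_card (hγ : 0 < γ) (d : ℕ) {R : ℝ} (hR : 1 ≤ R) : 1 ≤ (HS γ d R).card := by
  rw [Finset.one_le_card]
  refine ⟨0, ?_⟩
  rw [mem_HS_iff hγ]
  have h : ∀ j : Fin d, ww γ ((0: Fin d → ℤ) j) = 1 := by intro j; simp [ww, hγ.le]
  rw [Finset.prod_congr rfl (fun j _ => h j)]
  simpa using hR

lemma HS_succ_card {γ : ℝ} (hγ : 0 < γ) (d : ℕ) {R : ℝ} (hR : 0 ≤ R) :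
    (HS γ (d+1) R).card = ∑ m ∈ hbox γ R, (HS γ d (R / ww γ m)).card := by
  classical
  rw [← Finset.card_sigma]
  refine Finset.card_bij' (fun k _ => (⟨k (Fin.last d), Fin.init k⟩ : Σ _m : ℤ, Fin d → ℤ))
    (fun p _ => Fin.snoc p.2 p.1) ?hi ?hj ?li ?ri
  case hi =>
    intro k hk
    rw [mem_HS_iff hγ] at hk
    rw [Fin.prod_univ_castSucc (f := fun j => ww γ (k j))] at hk
    have hprod : (∏ j : Fin d, ww γ (Fin.init k j)) * ww γ (k (Fin.last d)) ≤ R := hk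
    have hw := ww_pos γ (k (Fin.last d))
    rw [Finset.mem_sigma]
    constructor
    · apply mem_hbox hγ
      calc ww γ (k (Fin.last d)) = 1 * ww γ (k (Fin.last d)) := (one_mul _).symm
      _ ≤ _ := (mul_le_mul_of_nonneg_right (one_le_prod_ww γ (Fin.init k)) hw.le).trans hprod
    · rw [mem_HS_iff hγ, le_div_iff₀ hw]
      exact hprod
  case li =>
    intro k _
    exact Fin.snoc_init_self k
  case ri =>
    intro p _
    obtain ⟨m, v⟩ := p
    simp [Fin.snoc_last, Fin.init_snoc]
  case hj =>
    intro p hp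
    rw [Finset.mem_sigma] at hp
    obtain ⟨hm, hv⟩ := hp
    rw [mem_HS_iff hγ] at hv ⊢
    have hw := ww_pos γ p.1
    rw [Fin.prod_univ_castSucc]
    simp only [Fin.snoc_castSucc, Fin.snoc_last]
    rw [← le_div_iff₀ hw]
    exact hv

lemma log_diff_ge (n : ℕ) (hn : 1 ≤ n) : 1/((n:ℝ)+1) ≤ Real.log (n+1) - Real.log n := by
  have hn0 : (0:ℝ) < n := by exact_mod_cast hn
  have h := Real.log_le_sub_one_of_pos (x := (n:ℝ)/(n+1)) (by positivity)
  rw [Real.log_div (by positivity) (by positivity)] at h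
  have : (n:ℝ)/(n+1) - 1 = -(1/((n:ℝ)+1)) := by field_simp; ring
  rw [this] at h
  linarith

lemma log_diff_le (n : ℕ) : Real.log (n+2) - Real.log (n+1) ≤ 1/((n:ℝ)+1) := by
  have h := Real.log_le_sub_one_of_pos (x := ((n:ℝ)+2)/((n:ℝ)+1)) (by positivity)
  rw [Real.log_div (by positivity) (by positivity)] at h
  have : ((n:ℝ)+2)/((n:ℝ)+1) - 1 = 1/((n:ℝ)+1) := by field_simp; ring
  rw [this] at h
  linarith

lemma harm_le : ∀ n : ℕ, 1 ≤ n → ∑ k ∈ Finset.Icc 1 n, (1/(k:ℝ)) ≤ 1 + Real.log n := by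
  intro n hn
  induction n with
  | zero => omega
  | succ m ih =>
    rcases Nat.eq_or_lt_of_le hn with h | h
    · simp [← h]
    · have hm : 1 ≤ m := by omega
      have := ih hm
      rw [Finset.sum_Icc_succ_top (by omega : 1 ≤ m+1)]
      have hd := log_diff_ge m hm
      push_cast
      push_cast at this hd
      linarith

lemma harm_ge : ∀ n : ℕ, Real.log (n+1) ≤ ∑ k ∈ Finset.Icc 1 n, (1/(k:ℝ)) := by
  intro n
  induction n with
  | zero => simp
  | succ m ih =>
    rw [Finset.sum_Icc_succ_top (by omega : 1 ≤ m+1)]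
    have hd := log_diff_le m
    push_cast
    push_cast at ih hd
    rw [show ((m:ℝ)+1+1) = (m:ℝ)+2 by ring]
    linarith

lemma int_sum_eq (f : ℤ → ℝ) (b : ℕ) :
    ∑ m ∈ Finset.Icc (1:ℤ) (b:ℤ), f m = ∑ n ∈ Finset.Icc 1 b, f n := by
  have himg : Finset.image (fun n : ℕ => (n:ℤ)) (Finset.Icc 1 b) = Finset.Icc (1:ℤ) (b:ℤ) := by
    ext x
    simp only [Finset.mem_image, Finset.mem_Icc]
    constructor
    · rintro ⟨n, ⟨h1, h2⟩, rfl⟩; omega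
    · rintro ⟨h1, h2⟩; exact ⟨x.toNat, by omega, by omega⟩
  rw [← himg, Finset.sum_image (by intro x _ y _ h; exact_mod_cast (show (x:ℤ) = y from h))]

lemma ww_neg (γ : ℝ) (m : ℤ) : ww γ (-m) = ww γ m := by simp [ww]

lemma ww_nat {γ : ℝ} (hγ : 0 < γ) (n : ℕ) : ww γ (n:ℤ) = max 1 ((n:ℝ)/γ) := by
  simp [ww, abs_of_nonneg (by positivity : (0:ℝ) ≤ (n:ℝ))]

lemma ww_ge_div {γ : ℝ} (hγ : 0 < γ) (n : ℕ) : (n:ℝ) / max 1 γ ≤ ww γ (n:ℤ) := by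
  rw [ww_nat hγ]
  rcases le_total γ 1 with h1 | h1
  · rw [max_eq_left h1]
    calc (n:ℝ)/1 = n := div_one _
    _ ≤ (n:ℝ)/γ := by
        rw [le_div_iff₀ hγ]; nlinarith [Nat.cast_nonneg (α := ℝ) n]
    _ ≤ _ := le_max_right _ _
  · rw [max_eq_right h1]
    exact le_max_right _ _

lemma ww_le_div {γ : ℝ} (hγ : 0 < γ) {n : ℕ} (hn : 1 ≤ n) : ww γ (n:ℤ) ≤ (n:ℝ) / min 1 γ := by
  have hn1 : (1:ℝ) ≤ n := by exact_mod_cast hn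
  rw [ww_nat hγ]
  rcases le_total γ 1 with h1 | h1
  · rw [min_eq_right h1]
    apply max_le _ le_rfl
    rw [le_div_iff₀ hγ]; nlinarith
  · rw [min_eq_left h1]
    rw [div_one]
    apply max_le hn1
    rw [div_le_iff₀ hγ]; nlinarith

lemma inv_ww_le {γ : ℝ} (hγ : 0 < γ) {n : ℕ} (hn : 1 ≤ n) :
    1 / ww γ (n:ℤ) ≤ max 1 γ * (1/n) := by
  have hn0 : (0:ℝ) < n := by exact_mod_cast hn
  have hmax : (0:ℝ) < max 1 γ := lt_max_of_lt_left one_pos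
  have h := ww_ge_div hγ n
  have hb : (0:ℝ) < (n:ℝ)/max 1 γ := by positivity
  calc 1 / ww γ (n:ℤ) ≤ 1 / ((n:ℝ)/max 1 γ) := one_div_le_one_div_of_le hb h
  _ = max 1 γ * (1/n) := by field_simp
lemma inv_ww_ge {γ : ℝ} (hγ : 0 < γ) {n : ℕ} (hn : 1 ≤ n) :
    min 1 γ * (1/n) ≤ 1 / ww γ (n:ℤ) := by
  have hn0 : (0:ℝ) < n := by exact_mod_cast hn
  have hmin : (0:ℝ) < min 1 γ := lt_min one_pos hγ
  have h := ww_le_div hγ hn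
  calc min 1 γ * (1/n) = 1 / ((n:ℝ)/min 1 γ) := by field_simp
  _ ≤ 1 / ww γ (n:ℤ) := one_div_le_one_div_of_le (ww_pos γ _) h

lemma sumw_le {γ : ℝ} (hγ : 0 < γ) :
    ∃ K : ℝ, 0 < K ∧ ∀ R : ℝ, 2 ≤ R →
      ∑ m ∈ hbox γ R, 1 / ww γ m ≤ K * Real.log R := by
  classical
  set A0 : ℝ := 2 + 2 * max 1 γ * (1 + Real.log (γ+1)) with hA0
  set B0 : ℝ := 2 * max 1 γ with hB0
  have hmax : (0:ℝ) < max 1 γ := lt_max_of_lt_left one_pos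
  have hlogγ1 : 0 ≤ Real.log (γ+1) := Real.log_nonneg (by linarith)
  have hA0pos : 0 < A0 := by positivity
  have hB0pos : 0 < B0 := by positivity
  have hlog2 : 0 < Real.log 2 := Real.log_pos (by norm_num)
  refine ⟨A0 / Real.log 2 + B0, by positivity, ?_⟩
  intro R hR
  have hR0 : (0:ℝ) < R := by linarith
  have hlogR : Real.log 2 ≤ Real.log R := Real.log_le_log (by norm_num) hR
  have hlogR0 : 0 < Real.log R := lt_of_lt_of_le hlog2 hlogR
  set M : ℤ := ⌈γ*R⌉ with hM
  have hM1 : 1 ≤ M := by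
    have : (0:ℝ) < γ*R := by positivity
    exact Int.ceil_pos.mpr this
  set Mt : ℕ := M.toNat with hMt
  have hMt1 : 1 ≤ Mt := by omega
  have hMtM : (Mt : ℤ) = M := Int.toNat_of_nonneg (by omega)
  -- the two images
  set A : Finset ℤ := Finset.image (fun n : ℕ => (n:ℤ)) (Finset.range (Mt+1)) with hA
  set B : Finset ℤ := Finset.image (fun n : ℕ => -(n:ℤ)) (Finset.range (Mt+1)) with hB
  have hsub : hbox γ R ⊆ A ∪ B := by
    intro m hm
    simp only [hbox, Finset.mem_Icc] at hm
    simp only [A, B, Finset.mem_union, Finset.mem_image, Finset.mem_range]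
    rcases le_total 0 m with h | h
    · exact Or.inl ⟨m.toNat, by omega, by omega⟩
    · exact Or.inr ⟨(-m).toNat, by omega, by omega⟩
  have hnonneg : ∀ m : ℤ, 0 ≤ 1 / ww γ m := fun m => one_div_nonneg.mpr (ww_pos γ m).le
  have step1 : ∑ m ∈ hbox γ R, 1 / ww γ m ≤ ∑ m ∈ A ∪ B, 1 / ww γ m :=
    Finset.sum_le_sum_of_subset_of_nonneg hsub (fun m _ _ => hnonneg m)
  have step2 : ∑ m ∈ A ∪ B, 1 / ww γ m ≤
      (∑ m ∈ A, 1 / ww γ m) + ∑ m ∈ B, 1 / ww γ m := by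
    have h := Finset.sum_union_inter (s₁ := A) (s₂ := B) (f := fun m => 1 / ww γ m)
    have h2 : 0 ≤ ∑ m ∈ A ∩ B, 1 / ww γ m := Finset.sum_nonneg (fun m _ => hnonneg m)
    linarith
  have hAsum : ∑ m ∈ A, 1 / ww γ m = ∑ n ∈ Finset.range (Mt+1), 1 / ww γ (n:ℤ) :=
    Finset.sum_image (by intro x _ y _ h; exact_mod_cast (show (x:ℤ) = y from h))
  have hBsum : ∑ m ∈ B, 1 / ww γ m = ∑ n ∈ Finset.range (Mt+1), 1 / ww γ (n:ℤ) := by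
    rw [hB, Finset.sum_image (by intro x _ y _ h; have h' : -(x:ℤ) = -(y:ℤ) := h; omega)]
    exact Finset.sum_congr rfl (fun n _ => by rw [ww_neg])
  -- split off n = 0
  have hsplit : Finset.range (Mt+1) = insert 0 (Finset.Icc 1 Mt) := by
    ext n; simp only [Finset.mem_range, Finset.mem_insert, Finset.mem_Icc]; omega
  have hzero : 1 / ww γ ((0:ℕ):ℤ) = 1 := by
    simp [ww]
  have hS : ∑ n ∈ Finset.range (Mt+1), 1 / ww γ (n:ℤ)
      ≤ 1 + max 1 γ * (1 + Real.log Mt) := by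
    rw [hsplit, Finset.sum_insert (by simp)]
    rw [hzero]
    have h1 : ∑ n ∈ Finset.Icc 1 Mt, 1 / ww γ (n:ℤ)
        ≤ max 1 γ * ∑ n ∈ Finset.Icc 1 Mt, (1/(n:ℝ)) := by
      rw [Finset.mul_sum]
      apply Finset.sum_le_sum
      intro n hn
      simp only [Finset.mem_Icc] at hn
      exact inv_ww_le hγ hn.1
    have h2 := harm_le Mt hMt1
    have : max 1 γ * ∑ n ∈ Finset.Icc 1 Mt, (1/(n:ℝ)) ≤ max 1 γ * (1 + Real.log Mt) :=
      mul_le_mul_of_nonneg_left h2 hmax.le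
    linarith
  have hMtle : (Mt:ℝ) ≤ (γ+1) * R := by
    have h1 : (M:ℝ) < γ*R + 1 := Int.ceil_lt_add_one _
    have h2 : (Mt:ℝ) = (M:ℝ) := by exact_mod_cast hMtM
    nlinarith
  have hlogMt : Real.log Mt ≤ Real.log (γ+1) + Real.log R := by
    calc Real.log Mt ≤ Real.log ((γ+1)*R) := by
          apply Real.log_le_log (by exact_mod_cast hMt1) hMtle
    _ = _ := Real.log_mul (by positivity) (by positivity)
  have final : ∑ m ∈ hbox γ R, 1 / ww γ m ≤ A0 + B0 * Real.log R := by
    have : ∑ m ∈ hbox γ R, 1 / ww γ m ≤ 2 * (1 + max 1 γ * (1 + Real.log Mt)) := by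
      rw [hAsum] at step2
      rw [hBsum] at step2
      have := le_trans step1 step2
      linarith [hS]
    have expand : 2 * (1 + max 1 γ * (1 + Real.log (γ+1) + Real.log R)) = A0 + B0 * Real.log R := by
      rw [hA0, hB0]; ring
    nlinarith [hlogMt, hmax]
  calc ∑ m ∈ hbox γ R, 1 / ww γ m ≤ A0 + B0 * Real.log R := final
  _ ≤ (A0/Real.log 2) * Real.log R + B0 * Real.log R := by
      have : A0 = (A0/Real.log 2) * Real.log 2 := by field_simp
      nlinarith [div_pos hA0pos hlog2]
  _ = (A0 / Real.log 2 + B0) * Real.log R := by ring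

lemma sumw_ge {γ : ℝ} (hγ : 0 < γ) :
    ∃ κ R₁ : ℝ, 0 < κ ∧ 4 ≤ R₁ ∧ ∀ R : ℝ, R₁ ≤ R →
      κ * Real.log R ≤ ∑ m ∈ Finset.Icc (1:ℤ) ⌊γ * Real.sqrt R⌋, 1 / ww γ m := by
  classical
  have hmin : (0:ℝ) < min 1 γ := lt_min one_pos hγ
  refine ⟨min 1 γ / 4, max 4 (γ⁻¹^4 + γ⁻¹^2), by positivity, le_max_left _ _, ?_⟩
  intro R hR
  have hR4 : (4:ℝ) ≤ R := le_trans (le_max_left _ _) hR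
  have hR0 : (0:ℝ) < R := by linarith
  have hRγ4 : γ⁻¹^4 ≤ R := by
    have := le_trans (le_max_right _ _) hR
    nlinarith [sq_nonneg γ⁻¹]
  have hRγ2 : γ⁻¹^2 ≤ R := by
    have h := le_trans (le_max_right _ _) hR
    have h2 : (0:ℝ) ≤ γ⁻¹^4 := by positivity
    linarith
  have hsR2 : 2 ≤ Real.sqrt R := by
    rw [show (2:ℝ) = Real.sqrt 4 by rw [show (4:ℝ) = 2^2 by norm_num, Real.sqrt_sq (by norm_num)]]
    exact Real.sqrt_le_sqrt hR4
  have hsR0 : 0 < Real.sqrt R := by linarith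
  have hsRγ : 1 ≤ γ * Real.sqrt R := by
    have h1 : γ⁻¹ ≤ Real.sqrt R := by
      rw [show γ⁻¹ = Real.sqrt (γ⁻¹^2) by rw [Real.sqrt_sq (by positivity)]]
      exact Real.sqrt_le_sqrt hRγ2
    calc (1:ℝ) = γ * γ⁻¹ := by field_simp
    _ ≤ γ * Real.sqrt R := mul_le_mul_of_nonneg_left h1 hγ.le
  set T : ℤ := ⌊γ * Real.sqrt R⌋ with hT
  have hT1 : 1 ≤ T := by
    rwa [hT, Int.le_floor, Int.cast_one]
  set Tt : ℕ := T.toNat with hTt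
  have hTt1 : 1 ≤ Tt := by omega
  have hTtT : ((Tt:ℕ) : ℤ) = T := Int.toNat_of_nonneg (by omega)
  have hsum : ∑ m ∈ Finset.Icc (1:ℤ) T, 1 / ww γ m
      = ∑ n ∈ Finset.Icc 1 Tt, 1 / ww γ (n:ℤ) := by
    rw [← hTtT]
    exact int_sum_eq (fun m => 1 / ww γ m) Tt
  rw [hsum]
  have h1 : min 1 γ * ∑ n ∈ Finset.Icc 1 Tt, (1/(n:ℝ))
      ≤ ∑ n ∈ Finset.Icc 1 Tt, 1 / ww γ (n:ℤ) := by
    rw [Finset.mul_sum]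
    apply Finset.sum_le_sum
    intro n hn
    simp only [Finset.mem_Icc] at hn
    exact inv_ww_ge hγ hn.1
  have h2 : Real.log (Tt+1) ≤ ∑ n ∈ Finset.Icc 1 Tt, (1/(n:ℝ)) := harm_ge Tt
  have h3 : Real.log (γ * Real.sqrt R) ≤ Real.log (Tt+1) := by
    apply Real.log_le_log (by linarith)
    have := Int.lt_floor_add_one (γ * Real.sqrt R)
    have hc : ((Tt:ℕ):ℝ) = ((T:ℤ):ℝ) := by exact_mod_cast congrArg (fun z : ℤ => (z:ℝ)) hTtT
    push_cast at hc ⊢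
    rw [hc]
    linarith
  have h4 : Real.log (γ * Real.sqrt R) = Real.log γ + Real.log R / 2 := by
    rw [Real.log_mul (by positivity) (by positivity), Real.log_sqrt hR0.le]
  have h5 : Real.log R / 4 ≤ Real.log γ + Real.log R / 2 := by
    have hlog : Real.log (γ⁻¹^4) ≤ Real.log R := Real.log_le_log (by positivity) hRγ4
    rw [Real.log_pow, Real.log_inv] at hlog
    push_cast at hlog
    linarith
  have hlogR0 : 0 ≤ Real.log R := Real.log_nonneg (by linarith)
  calc (min 1 γ / 4) * Real.log R = min 1 γ * (Real.log R / 4) := by ring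
  _ ≤ min 1 γ * (Real.log γ + Real.log R / 2) := mul_le_mul_of_nonneg_left h5 hmin.le
  _ ≤ min 1 γ * Real.log (Tt+1) := by
      rw [← h4]
      exact mul_le_mul_of_nonneg_left h3 hmin.le
  _ ≤ min 1 γ * ∑ n ∈ Finset.Icc 1 Tt, (1/(n:ℝ)) := mul_le_mul_of_nonneg_left h2 hmin.le
  _ ≤ _ := h1
set_option maxHeartbeats 1000000

lemma hbox_card_le {γ : ℝ} (hγ : 0 < γ) {R : ℝ} (hR : 2 ≤ R) :
    ((hbox γ R).card : ℝ) ≤ (2*γ+2)*R := by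
  have hM1 : 1 ≤ ⌈γ*R⌉ := Int.ceil_pos.mpr (by positivity)
  have hcard : (hbox γ R).card = (⌈γ*R⌉ + 1 - (-⌈γ*R⌉)).toNat := Int.card_Icc _ _
  have hMle : (⌈γ*R⌉:ℝ) < γ*R + 1 := Int.ceil_lt_add_one _
  have : ((hbox γ R).card : ℝ) = 2*(⌈γ*R⌉:ℝ) + 1 := by
    rw [hcard]
    have h2 : (⌈γ*R⌉ + 1 - (-⌈γ*R⌉)) = 2*⌈γ*R⌉+1 := by ring
    rw [h2]
    exact_mod_cast Int.toNat_of_nonneg (by omega : (0:ℤ) ≤ 2*⌈γ*R⌉+1)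
  rw [this]
  nlinarith

lemma base_lower {γ : ℝ} (hγ : 0 < γ) {R : ℝ} (hR : 2 ≤ R) :
    γ * R ≤ ((HS γ 1 R).card : ℝ) := by
  classical
  have hγR : (0:ℝ) < γ * R := by positivity
  set ι : ℤ → (Fin 1 → ℤ) := fun m => fun _ => m with hι
  have hinj : Function.Injective ι := by
    intro a b h
    exact congrFun h 0
  have hsub : Finset.image ι (Finset.Icc 0 ⌊γ*R⌋) ⊆ HS γ 1 R := by
    intro k hk
    simp only [Finset.mem_image, Finset.mem_Icc] at hk
    obtain ⟨m, ⟨hm0, hmT⟩, rfl⟩ := hk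
    rw [mem_HS_iff hγ]
    rw [Fin.prod_univ_one]
    show ww γ m ≤ R
    have hmR : (m:ℝ) ≤ γ*R := le_trans (by exact_mod_cast hmT) (Int.floor_le _)
    simp only [ww]
    apply max_le (by linarith)
    rw [div_le_iff₀ hγ, abs_of_nonneg (by exact_mod_cast hm0 : (0:ℝ) ≤ (m:ℝ))]
    linarith [hmR]
  have hfloor0 : 0 ≤ ⌊γ*R⌋ := Int.floor_nonneg.mpr hγR.le
  have hcard : (Finset.image ι (Finset.Icc 0 ⌊γ*R⌋)).card = (Finset.Icc (0:ℤ) ⌊γ*R⌋).card :=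
    Finset.card_image_of_injective _ hinj
  have hIcc : ((Finset.Icc (0:ℤ) ⌊γ*R⌋).card : ℝ) = (⌊γ*R⌋:ℝ) + 1 := by
    rw [Int.card_Icc]
    rw [show (⌊γ*R⌋ + 1 - 0) = ⌊γ*R⌋ + 1 by ring]
    exact_mod_cast Int.toNat_of_nonneg (by omega : (0:ℤ) ≤ ⌊γ*R⌋+1)
  have hle := Finset.card_le_card hsub
  rw [hcard] at hle
  have : ((Finset.Icc (0:ℤ) ⌊γ*R⌋).card : ℝ) ≤ ((HS γ 1 R).card : ℝ) := by exact_mod_cast hle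
  rw [hIcc] at this
  linarith [Int.lt_floor_add_one (γ*R)]

lemma base_upper {γ : ℝ} (hγ : 0 < γ) {R : ℝ} (hR : 2 ≤ R) :
    ((HS γ 1 R).card : ℝ) ≤ (2*γ+2)*R := by
  classical
  have h1 : (HS γ 1 R).card ≤ (Fintype.piFinset fun _ : Fin 1 => hbox γ R).card :=
    Finset.card_le_card (Finset.filter_subset _ _)
  rw [Fintype.card_piFinset] at h1
  simp only [Finset.prod_const, Finset.card_univ, Fintype.card_fin, pow_one] at h1
  calc ((HS γ 1 R).card : ℝ) ≤ ((hbox γ R).card : ℝ) := by exact_mod_cast h1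
  _ ≤ _ := hbox_card_le hγ hR

lemma main_bounds {γ : ℝ} (hγ : 0 < γ) : ∀ d : ℕ, 1 ≤ d →
    ∃ c C : ℝ, 0 < c ∧ 0 < C ∧ ∀ R : ℝ, 2 ≤ R →
      c * R * (Real.log R)^(d-1) ≤ ((HS γ d R).card : ℝ) ∧
      ((HS γ d R).card : ℝ) ≤ C * R * (Real.log R)^(d-1) := by
  intro d hd
  induction d, hd using Nat.le_induction with
  | base =>
    refine ⟨γ, 2*γ+2, hγ, by positivity, ?_⟩
    intro R hR
    simp only [Nat.sub_self, pow_zero, mul_one]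
    exact ⟨base_lower hγ hR, base_upper hγ hR⟩
  | succ n hn ih =>
    obtain ⟨e, rfl⟩ : ∃ e, n = e + 1 := ⟨n - 1, by omega⟩
    simp only [Nat.add_sub_cancel] at ih ⊢
    obtain ⟨c, C, hc, hC, hIH⟩ := ih
    obtain ⟨K, hK, hKs⟩ := sumw_le hγ
    obtain ⟨κ, R₁, hκ, hR₁4, hκs⟩ := sumw_ge hγ
    have hlog2 : 0 < Real.log 2 := Real.log_pos (by norm_num)
    have hlog2le1 : Real.log 2 ≤ 1 := by linarith [Real.log_le_sub_one_of_pos (by norm_num : (0:ℝ) < 2)]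
    have hlogR₁ : 0 < Real.log R₁ := Real.log_pos (by linarith)
    refine ⟨min (c*κ/2^e) (1/(R₁*(Real.log R₁)^(e+1))),
            C*K + 2*C*(2*γ+2)/(Real.log 2)^(e+1), ?_, by positivity, ?_⟩
    · apply lt_min (by positivity) (by positivity)
    intro R hR
    have hR0 : (0:ℝ) < R := by linarith
    have hlogR2 : Real.log 2 ≤ Real.log R := Real.log_le_log (by norm_num) hR
    have hlogR0 : 0 ≤ Real.log R := le_trans hlog2.le hlogR2
    have hrecN := HS_succ_card hγ (e+1) (R := R) (by linarith)
    have hrec : ((HS γ (e+1+1) R).card : ℝ)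
        = ∑ m ∈ hbox γ R, ((HS γ (e+1) (R / ww γ m)).card : ℝ) := by
      rw [hrecN]; push_cast; ring
    constructor
    · -- LOWER BOUND
      rcases le_or_gt R₁ R with hbig | hsmall
      · -- R ≥ R₁
        have hR4 : (4:ℝ) ≤ R := by linarith
        have hsR2 : 2 ≤ Real.sqrt R := by
          rw [show (2:ℝ) = Real.sqrt 4 by
            rw [show (4:ℝ) = 2^2 by norm_num, Real.sqrt_sq (by norm_num)]]
          exact Real.sqrt_le_sqrt hR4
        have hsR0 : (0:ℝ) < Real.sqrt R := by linarith
        set T : ℤ := ⌊γ * Real.sqrt R⌋ with hT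
        have hsub : Finset.Icc (1:ℤ) T ⊆ hbox γ R := by
          intro m hm
          simp only [Finset.mem_Icc] at hm
          have h1 : T ≤ ⌈γ*R⌉ := by
            have hs : Real.sqrt R ≤ R := by
              calc Real.sqrt R ≤ Real.sqrt (R^2) := Real.sqrt_le_sqrt (by nlinarith)
              _ = R := Real.sqrt_sq hR0.le
            have : γ * Real.sqrt R ≤ γ * R := by nlinarith
            calc T ≤ ⌊γ*R⌋ := Int.floor_le_floor this
            _ ≤ ⌈γ*R⌉ := Int.floor_le_ceil _
          have h2 : 1 ≤ ⌈γ*R⌉ := Int.ceil_pos.mpr (by positivity)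
          simp only [hbox, Finset.mem_Icc]
          omega
        have hsummono : ∑ m ∈ Finset.Icc (1:ℤ) T, (HS γ (e+1) (R / ww γ m)).card
            ≤ ∑ m ∈ hbox γ R, (HS γ (e+1) (R / ww γ m)).card :=
          Finset.sum_le_sum_of_subset hsub
        have hper : ∀ m ∈ Finset.Icc (1:ℤ) T,
            c * R * ((Real.log R)^e / 2^e) * (1 / ww γ m)
              ≤ ((HS γ (e+1) (R / ww γ m)).card : ℝ) := by
          intro m hm
          simp only [Finset.mem_Icc] at hm
          have hw0 := ww_pos γ m
          have hww : ww γ m ≤ Real.sqrt R := by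
            have hmT : (m:ℝ) ≤ γ * Real.sqrt R := by
              calc (m:ℝ) ≤ (T:ℝ) := by exact_mod_cast hm.2
              _ ≤ _ := Int.floor_le _
            have hm1 : (1:ℝ) ≤ (m:ℝ) := by exact_mod_cast hm.1
            simp only [ww]
            apply max_le (by linarith)
            rw [div_le_iff₀ hγ, abs_of_nonneg (by linarith)]
            nlinarith
          have hR' : Real.sqrt R ≤ R / ww γ m := by
            rw [le_div_iff₀ hw0]
            nlinarith [Real.sq_sqrt hR0.le, Real.sqrt_nonneg R]
          have h2R' : 2 ≤ R / ww γ m := by linarith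
          have hIHlow := (hIH _ h2R').1
          have hlogR' : Real.log R / 2 ≤ Real.log (R / ww γ m) := by
            rw [← Real.log_sqrt hR0.le]
            exact Real.log_le_log hsR0 hR'
          have hlhalf : 0 ≤ Real.log R / 2 := by linarith
          have hpow : (Real.log R / 2)^e ≤ (Real.log (R / ww γ m))^e :=
            pow_le_pow_left₀ hlhalf hlogR' e
          calc c * R * ((Real.log R)^e / 2^e) * (1 / ww γ m)
              = c * (R / ww γ m) * (Real.log R / 2)^e := by
                rw [div_pow]; ring
          _ ≤ c * (R / ww γ m) * (Real.log (R / ww γ m))^e := by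
                apply mul_le_mul_of_nonneg_left hpow
                positivity
          _ ≤ _ := hIHlow
        have hsum1 : ∑ m ∈ Finset.Icc (1:ℤ) T, c * R * ((Real.log R)^e / 2^e) * (1 / ww γ m)
            ≤ ∑ m ∈ Finset.Icc (1:ℤ) T, ((HS γ (e+1) (R / ww γ m)).card : ℝ) :=
          Finset.sum_le_sum hper
        have hfact : ∑ m ∈ Finset.Icc (1:ℤ) T, c * R * ((Real.log R)^e / 2^e) * (1 / ww γ m)
            = c * R * ((Real.log R)^e / 2^e) * ∑ m ∈ Finset.Icc (1:ℤ) T, (1 / ww γ m) := by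
          rw [Finset.mul_sum]
        have hκR := hκs R hbig
        have hchain : (c*κ/2^e) * R * (Real.log R)^(e+1)
            ≤ c * R * ((Real.log R)^e / 2^e) * ∑ m ∈ Finset.Icc (1:ℤ) T, (1 / ww γ m) := by
          have hco : 0 ≤ c * R * ((Real.log R)^e / 2^e) := by positivity
          calc (c*κ/2^e) * R * (Real.log R)^(e+1)
              = c * R * ((Real.log R)^e / 2^e) * (κ * Real.log R) := by ring
          _ ≤ _ := mul_le_mul_of_nonneg_left hκR hco
        have hcast : ∑ m ∈ Finset.Icc (1:ℤ) T, ((HS γ (e+1) (R / ww γ m)).card : ℝ)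
            ≤ ((HS γ (e+1+1) R).card : ℝ) := by
          rw [hrec]
          exact_mod_cast hsummono
        have hminle : min (c*κ/2^e) (1/(R₁*(Real.log R₁)^(e+1))) ≤ c*κ/2^e := min_le_left _ _
        calc min (c*κ/2^e) (1/(R₁*(Real.log R₁)^(e+1))) * R * (Real.log R)^(e+1)
            ≤ (c*κ/2^e) * R * (Real.log R)^(e+1) := by
              apply mul_le_mul_of_nonneg_right _ (by positivity)
              exact mul_le_mul_of_nonneg_right hminle hR0.le
        _ ≤ c * R * ((Real.log R)^e / 2^e) * ∑ m ∈ Finset.Icc (1:ℤ) T, (1 / ww γ m) := hchain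
        _ = _ := hfact.symm
        _ ≤ ∑ m ∈ Finset.Icc (1:ℤ) T, ((HS γ (e+1) (R / ww γ m)).card : ℝ) := hsum1
        _ ≤ _ := hcast
      · -- 2 ≤ R < R₁
        have hone : 1 ≤ (HS γ (e+1+1) R).card := one_le_HS_card hγ _ (by linarith)
        have honeR : (1:ℝ) ≤ ((HS γ (e+1+1) R).card : ℝ) := by exact_mod_cast hone
        have hlogle : Real.log R ≤ Real.log R₁ := Real.log_le_log hR0 hsmall.le
        have hmono : R * (Real.log R)^(e+1) ≤ R₁ * (Real.log R₁)^(e+1) := by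
          apply mul_le_mul hsmall.le (pow_le_pow_left₀ hlogR0 hlogle _) (by positivity) (by linarith)
        have hminle : min (c*κ/2^e) (1/(R₁*(Real.log R₁)^(e+1)))
            ≤ 1/(R₁*(Real.log R₁)^(e+1)) := min_le_right _ _
        calc min (c*κ/2^e) (1/(R₁*(Real.log R₁)^(e+1))) * R * (Real.log R)^(e+1)
            ≤ 1/(R₁*(Real.log R₁)^(e+1)) * (R * (Real.log R)^(e+1)) := by
              rw [mul_assoc]
              apply mul_le_mul_of_nonneg_right hminle (by positivity)
        _ ≤ 1/(R₁*(Real.log R₁)^(e+1)) * (R₁ * (Real.log R₁)^(e+1)) := by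
              apply mul_le_mul_of_nonneg_left hmono (by positivity)
        _ = 1 := by field_simp
        _ ≤ _ := honeR
    · -- UPPER BOUND
      have hper : ∀ m ∈ hbox γ R, ((HS γ (e+1) (R / ww γ m)).card : ℝ)
          ≤ C * R * (Real.log R)^e * (1 / ww γ m) + 2*C := by
        intro m _
        have hw1 := one_le_ww γ m
        have hw0 := ww_pos γ m
        rcases le_or_gt (ww γ m) (R/2) with h | h
        · have hR' : 2 ≤ R / ww γ m := by
            rw [le_div_iff₀ hw0]; linarith
          have hIHup := (hIH _ hR').2
          have hlogR' : Real.log (R / ww γ m) ≤ Real.log R :=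
            Real.log_le_log (by linarith) (div_le_self hR0.le hw1)
          have hlogR'0 : 0 ≤ Real.log (R / ww γ m) := Real.log_nonneg (by linarith)
          have hpow : (Real.log (R / ww γ m))^e ≤ (Real.log R)^e :=
            pow_le_pow_left₀ hlogR'0 hlogR' e
          have h1 : C * (R / ww γ m) * (Real.log (R / ww γ m))^e
              ≤ C * (R / ww γ m) * (Real.log R)^e := by
            apply mul_le_mul_of_nonneg_left hpow (by positivity)
          have h2 : C * (R / ww γ m) * (Real.log R)^e
              = C * R * (Real.log R)^e * (1 / ww γ m) := by
            ring
          have h3 : (0:ℝ) ≤ 2*C := by positivity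
          calc ((HS γ (e+1) (R / ww γ m)).card : ℝ) ≤ C * (R / ww γ m) * (Real.log (R / ww γ m))^e := hIHup
          _ ≤ C * R * (Real.log R)^e * (1 / ww γ m) := by rw [← h2]; exact h1
          _ ≤ _ := by linarith
        · have hR' : R / ww γ m ≤ 2 := by
            rw [div_le_iff₀ hw0]; linarith
          have hmono := Finset.card_le_card (HS_mono γ hγ (e+1) hR')
          have hIHup := (hIH 2 le_rfl).2
          have hpow1 : (Real.log 2)^e ≤ 1 := pow_le_one₀ hlog2.le hlog2le1
          have h2 : ((HS γ (e+1) (R / ww γ m)).card : ℝ) ≤ ((HS γ (e+1) 2).card : ℝ) := by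
            exact_mod_cast hmono
          have hterm : (0:ℝ) ≤ C * R * (Real.log R)^e * (1 / ww γ m) := by positivity
          have : C * 2 * (Real.log 2)^e ≤ 2*C := by nlinarith
          linarith
      have hKR := hKs R hR
      have hboxle := hbox_card_le hγ hR
      have hpowR : (Real.log 2)^(e+1) ≤ (Real.log R)^(e+1) :=
        pow_le_pow_left₀ hlog2.le hlogR2 _
      calc ((HS γ (e+1+1) R).card : ℝ)
          = ∑ m ∈ hbox γ R, ((HS γ (e+1) (R / ww γ m)).card : ℝ) := hrec
      _ ≤ ∑ m ∈ hbox γ R, (C * R * (Real.log R)^e * (1 / ww γ m) + 2*C) :=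
          Finset.sum_le_sum hper
      _ = C * R * (Real.log R)^e * (∑ m ∈ hbox γ R, 1 / ww γ m)
            + 2*C*((hbox γ R).card : ℝ) := by
          rw [Finset.sum_add_distrib, ← Finset.mul_sum, Finset.sum_const, nsmul_eq_mul]
          ring
      _ ≤ C * R * (Real.log R)^e * (K * Real.log R) + 2*C*((2*γ+2)*R) := by
          apply add_le_add
          · exact mul_le_mul_of_nonneg_left hKR (by positivity)
          · exact mul_le_mul_of_nonneg_left hboxle (by positivity)
      _ ≤ (C*K + 2*C*(2*γ+2)/(Real.log 2)^(e+1)) * R * (Real.log R)^(e+1) := by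
          have hA : C * R * (Real.log R)^e * (K * Real.log R)
              = C*K * R * (Real.log R)^(e+1) := by ring
          have hB : 2*C*((2*γ+2)*R)
              ≤ 2*C*(2*γ+2)/(Real.log 2)^(e+1) * R * (Real.log R)^(e+1) := by
            have hL : (0:ℝ) < (Real.log 2)^(e+1) := by positivity
            rw [div_mul_eq_mul_div, div_mul_eq_mul_div, le_div_iff₀ hL]
            calc 2*C*((2*γ+2)*R) * (Real.log 2)^(e+1)
                ≤ 2*C*((2*γ+2)*R) * (Real.log R)^(e+1) := by
                  apply mul_le_mul_of_nonneg_left hpowR (by positivity)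
            _ = 2*C*(2*γ+2) * R * (Real.log R)^(e+1) := by ring
          rw [hA] at *
          nlinarith [hB]

/-- Cardinality of the hyperbolic cross `I(R) = {k ∈ ℤ^d : Π_j max(1, |k_j|/γ) ≤ R}`:
there are constants `c, C > 0` depending only on `d` and `γ` with
`c R (log R)^{d−1} ≤ |I(R)| ≤ C R (log R)^{d−1}` for all `R ≥ 2`. -/
theorem stmt16 (d : ℕ) (hd : 1 ≤ d) (γ : ℝ) (hγ : 0 < γ) :
    ∃ c C : ℝ, 0 < c ∧ 0 < C ∧ ∀ R : ℝ, 2 ≤ R →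
      c * R * (Real.log R) ^ (d - 1)
          ≤ (Nat.card {k : Fin d → ℤ | (∏ j, max 1 (|(k j : ℝ)| / γ)) ≤ R} : ℝ) ∧
      (Nat.card {k : Fin d → ℤ | (∏ j, max 1 (|(k j : ℝ)| / γ)) ≤ R} : ℝ)
          ≤ C * R * (Real.log R) ^ (d - 1) := by
  obtain ⟨c, C, hc, hC, h⟩ := main_bounds hγ d hd
  refine ⟨c, C, hc, hC, ?_⟩
  intro R hR
  rw [natCard_eq_HS_card hγ d R]
  exact h R hR
end
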